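/- arXiv:1801.05738 — 8 statements merged into one kernel-verified Lean document; each statement's English description precedes it below -/
import Mathlib

section
/- If the probability distribution p = (p_1, …, p_n) has r > 1 nonzero components, then the limit of C_α(p) as α tends to 0 from the right equals ((ln r)/(ln n)) · (ln(n + r) − ln(2n))/(ln(n + 1) − ln(2n)). -/
open Real Filter Topology

/-- Normalized Rényi entropy of a distribution `p` on `Fin n`. -/
noncomputable def renyiH (n : ℕ) (p : Fin n → ℝ) (α : ℝ) : ℝ :=
  (1 / ((1 - α) * Real.log n)) * Real.log (∑ i, p i ^ α)

/-- Jensen–Rényi divergence of `p` from the uniform distribution on `Fin n`. -/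
noncomputable def renyiD (n : ℕ) (p : Fin n → ℝ) (α : ℝ) : ℝ :=
  (1 / (2 * (α - 1))) *
    (Real.log (∑ i, p i ^ α * ((p i + 1 / (n : ℝ)) / 2) ^ (1 - α)) +
     Real.log (∑ i, (n : ℝ) ^ (-α) * ((p i + 1 / (n : ℝ)) / 2) ^ (1 - α)))

/-- Normalization constant `D_α^*`. -/
noncomputable def renyiDstar (n : ℕ) (α : ℝ) : ℝ :=
  (1 / (2 * (α - 1))) *
    Real.log (((((n : ℝ) + 1) ^ (1 - α) + (n : ℝ) - 1) / (n : ℝ)) *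
      (((n : ℝ) + 1) / (4 * (n : ℝ))) ^ (1 - α))

/-- Rényi statistical complexity. -/
noncomputable def renyiC (n : ℕ) (p : Fin n → ℝ) (α : ℝ) : ℝ :=
  renyiD n p α * renyiH n p α / renyiDstar n α

/-!
As `α → 0⁺`, `x ^ α` tends to `1` for `x ≠ 0` and vanishes identically for `x = 0`, so the power
sums `∑ pᵢ ^ α` and `∑ pᵢ ^ α qᵢ ^ (1 - α)` tend to `r` and to `∑_{pᵢ ≠ 0} qᵢ`; every other ingredient
of `C_α` is continuous at `α = 0`. Hence `H_α → ln r / ln n`, `D_α → -½ ln ((n + r) / 2n)` and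
`D_α* → -½ ln ((n + 1) / 2n)`, the last being nonzero for `n ≥ 2`.
-/

open Finset

section ElementaryLimits

lemma tendsto_rpow_nhdsGT_zero (b : ℝ) :
    Tendsto (fun α : ℝ => b ^ α) (𝓝[>] 0) (𝓝 (if b = 0 then 0 else 1)) := by
  split_ifs with hb
  · subst hb
    exact tendsto_const_nhds.congr' <|
      eventually_mem_nhdsWithin.mono fun α hα => (zero_rpow (ne_of_gt hα)).symm
  · simpa using (continuousAt_const_rpow hb (b := 0)).tendsto.mono_left nhdsWithin_le_nhds

lemma tendsto_rpow_one_sub (b : ℝ) : Tendsto (fun α : ℝ => b ^ (1 - α)) (𝓝 0) (𝓝 b) := by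
  have h : ContinuousAt (fun α : ℝ => b ^ (1 - α)) 0 :=
    continuousAt_const.rpow (continuousAt_const.sub continuousAt_id) (Or.inr (by norm_num))
  simpa using h.tendsto

lemma tendsto_one_div_one_sub_mul (L : ℝ) :
    Tendsto (fun α : ℝ => 1 / ((1 - α) * L)) (𝓝 0) (𝓝 (1 / L)) := by
  simp_rw [one_div, mul_inv]
  have h : ContinuousAt (fun α : ℝ => (1 - α)⁻¹) 0 := by fun_prop (disch := norm_num)
  simpa using h.tendsto.mul_const L⁻¹

lemma tendsto_one_div_two_mul_sub_one :
    Tendsto (fun α : ℝ => 1 / (2 * (α - 1))) (𝓝 0) (𝓝 (-(1 / 2))) := by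
  have h : ContinuousAt (fun α : ℝ => 1 / (2 * (α - 1))) 0 := by fun_prop (disch := norm_num)
  convert h.tendsto using 2
  norm_num

lemma tendsto_sum_rpow_mul_nhdsGT_zero {ι : Type*} (s : Finset ι) (f : ι → ℝ)
    {g : ι → ℝ → ℝ} {c : ι → ℝ} (hg : ∀ i ∈ s, Tendsto (g i) (𝓝[>] 0) (𝓝 (c i))) :
    Tendsto (fun α => ∑ i ∈ s, f i ^ α * g i α) (𝓝[>] 0) (𝓝 (∑ i ∈ s with f i ≠ 0, c i)) := by
  rw [sum_filter]
  refine tendsto_finsetSum s fun i hi => ?_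
  convert (tendsto_rpow_nhdsGT_zero (f i)).mul (hg i hi) using 2
  split_ifs <;> simp_all

end ElementaryLimits

section RenyiLimits

variable {n : ℕ} {p : Fin n → ℝ}

lemma tendsto_renyiH (hp : p ≠ 0) :
    Tendsto (renyiH n p) (𝓝[>] 0) (𝓝 (log #{i | p i ≠ 0} / log n)) := by
  obtain ⟨j, hj⟩ := Function.ne_iff.mp hp
  have hr : (#{i | p i ≠ 0} : ℝ) ≠ 0 := by
    exact_mod_cast (card_pos.mpr ⟨j, by simpa using hj⟩).ne'
  have hsum : Tendsto (fun α : ℝ => ∑ i, p i ^ α) (𝓝[>] 0) (𝓝 #{i | p i ≠ 0}) := by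
    simpa using tendsto_sum_rpow_mul_nhdsGT_zero univ p (g := fun _ _ => 1) (c := fun _ => 1)
      fun _ _ => tendsto_const_nhds
  rw [div_eq_inv_mul, ← one_div]
  exact ((tendsto_one_div_one_sub_mul (log n)).mono_left nhdsWithin_le_nhds).mul
    ((continuousAt_log hr).tendsto.comp hsum)

lemma tendsto_renyiD (hn : n ≠ 0) (hsum : ∑ i, p i = 1) :
    Tendsto (renyiD n p) (𝓝[>] 0) (𝓝 (-log ((n + #{i | p i ≠ 0}) / (2 * n)) / 2)) := by
  have hn' : (n : ℝ) ≠ 0 := Nat.cast_ne_zero.mpr hn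
  have hfirst : Tendsto (fun α : ℝ => ∑ i, p i ^ α * ((p i + 1 / n) / 2) ^ (1 - α)) (𝓝[>] 0)
      (𝓝 ((n + #{i | p i ≠ 0}) / (2 * n))) := by
    have hval : ∑ i with p i ≠ 0, (p i + 1 / (n : ℝ)) / 2 = (n + #{i | p i ≠ 0}) / (2 * n) := by
      rw [← sum_div, sum_add_distrib, sum_filter_ne_zero, hsum, sum_const, nsmul_eq_mul]
      field_simp
    rw [← hval]
    exact tendsto_sum_rpow_mul_nhdsGT_zero univ p fun i _ =>
      (tendsto_rpow_one_sub _).mono_left nhdsWithin_le_nhds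
  have hsecond : Tendsto (fun α : ℝ => ∑ i, (n : ℝ) ^ (-α) * ((p i + 1 / n) / 2) ^ (1 - α))
      (𝓝[>] 0) (𝓝 1) := by
    have hval : ∑ i, (p i + 1 / (n : ℝ)) / 2 = 1 := by
      rw [← sum_div, sum_add_distrib, hsum, sum_const, card_univ, Fintype.card_fin, nsmul_eq_mul]
      field_simp
      norm_num
    have hneg : Tendsto (fun α : ℝ => (n : ℝ) ^ (-α)) (𝓝 0) (𝓝 1) := by
      have h : ContinuousAt (fun α : ℝ => (n : ℝ) ^ (-α)) 0 := by
        fun_prop (disch := exact Or.inl hn')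
      simpa using h.tendsto
    have h := tendsto_finsetSum univ fun i _ =>
      hneg.mul (tendsto_rpow_one_sub ((p i + 1 / (n : ℝ)) / 2))
    simp only [one_mul, hval] at h
    exact h.mono_left nhdsWithin_le_nhds
  have hpos : ((n : ℝ) + #{i | p i ≠ 0}) / (2 * n) ≠ 0 := by positivity
  have hlim : -log (((n : ℝ) + #{i | p i ≠ 0}) / (2 * n)) / 2 =
      -(1 / 2) * (log (((n : ℝ) + #{i | p i ≠ 0}) / (2 * n)) + log 1) := by
    rw [log_one]
    ring
  rw [hlim]
  exact (tendsto_one_div_two_mul_sub_one.mono_left nhdsWithin_le_nhds).mul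
    (((continuousAt_log hpos).tendsto.comp hfirst).add
      ((continuousAt_log one_ne_zero).tendsto.comp hsecond))

lemma tendsto_renyiDstar (hn : n ≠ 0) :
    Tendsto (renyiDstar n) (𝓝[>] 0) (𝓝 (-log ((n + 1) / (2 * n)) / 2)) := by
  have hn' : (n : ℝ) ≠ 0 := Nat.cast_ne_zero.mpr hn
  have harg : Tendsto (fun α : ℝ => (((n + 1 : ℝ) ^ (1 - α) + n - 1) / n) *
      ((n + 1 : ℝ) / (4 * n)) ^ (1 - α)) (𝓝 0) (𝓝 ((n + 1) / (2 * n))) := by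
    convert ((((tendsto_rpow_one_sub _).add_const _).sub_const 1).div_const _).mul
      (tendsto_rpow_one_sub _) using 2
    field_simp
    ring
  have hpos : ((n : ℝ) + 1) / (2 * n) ≠ 0 := by positivity
  have hlim : -log (((n : ℝ) + 1) / (2 * n)) / 2 = -(1 / 2) * log ((n + 1) / (2 * n)) := by ring
  rw [hlim]
  exact (tendsto_one_div_two_mul_sub_one.mul
    ((continuousAt_log hpos).tendsto.comp harg)).mono_left nhdsWithin_le_nhds

lemma log_add_one_sub_log_two_mul_ne_zero (hn : 2 ≤ n) : log (n + 1) - log (2 * n) ≠ 0 := by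
  have hn' : (2 : ℝ) ≤ n := by exact_mod_cast hn
  exact (sub_neg.mpr (log_lt_log (by positivity) (by linarith))).ne

end RenyiLimits

theorem renyi_complexity_limit_zero_general (n : ℕ) (hn : 2 ≤ n) (p : Fin n → ℝ)
    (hsum : ∑ i, p i = 1) :
    Filter.Tendsto (fun α => renyiC n p α) (nhdsWithin 0 (Set.Ioi 0))
      (nhds ((Real.log ((Finset.univ.filter fun i => p i ≠ 0).card : ℝ) / Real.log n) *
        ((Real.log ((n : ℝ) + ((Finset.univ.filter fun i => p i ≠ 0).card : ℝ)) -
            Real.log (2 * (n : ℝ))) /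
          (Real.log ((n : ℝ) + 1) - Real.log (2 * (n : ℝ)))))) := by
  have hn0 : n ≠ 0 := by omega
  have hp : p ≠ 0 := by
    rintro rfl
    simp at hsum
  have h2n : (2 * n : ℝ) ≠ 0 := by positivity
  have hden := log_add_one_sub_log_two_mul_ne_zero hn
  have hDstar : -log ((n + 1) / (2 * n)) / 2 ≠ 0 := by
    rw [log_div (by positivity) h2n]
    exact fun h => hden (by linarith)
  have hlim : log #{i | p i ≠ 0} / log n *
      ((log (n + #{i | p i ≠ 0}) - log (2 * n)) / (log (n + 1) - log (2 * n))) =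
      -log ((n + #{i | p i ≠ 0}) / (2 * n)) / 2 * (log #{i | p i ≠ 0} / log n) /
        (-log ((n + 1) / (2 * n)) / 2) := by
    rw [log_div (by positivity) h2n, log_div (by positivity) h2n]
    field_simp
  rw [hlim]
  exact ((tendsto_renyiD hn0 hsum).mul (tendsto_renyiH hp)).div (tendsto_renyiDstar hn0) hDstar

/-- If `p` has `r > 1` nonzero components, then as `α → 0⁺`,
`C_α(p) → (ln r / ln n) * (ln(n+r) - ln(2n)) / (ln(n+1) - ln(2n))`. -/
theorem renyi_complexity_limit_zero (n : ℕ) (hn : 2 ≤ n) (p : Fin n → ℝ)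
    (hp : ∀ i, 0 ≤ p i) (hsum : ∑ i, p i = 1)
    (hr : 1 < (Finset.univ.filter fun i => p i ≠ 0).card) :
    Filter.Tendsto (fun α => renyiC n p α) (nhdsWithin 0 (Set.Ioi 0))
      (nhds ((Real.log ((Finset.univ.filter fun i => p i ≠ 0).card : ℝ) / Real.log n) *
        ((Real.log ((n : ℝ) + ((Finset.univ.filter fun i => p i ≠ 0).card : ℝ)) -
            Real.log (2 * (n : ℝ))) /
          (Real.log ((n : ℝ) + 1) - Real.log (2 * (n : ℝ)))))) :=
  renyi_complexity_limit_zero_general n hn p hsum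
end

section
/- If the probability distribution p = (p_1, …, p_n) has r > 1 nonzero components, with maximum component p_M and minimum component p_m, then the limit of C_α(p) as α → ∞ equals ((ln((n p_M + 1)(n p_m + 1)) − ln(4 n p_M))/(ln(4n) − ln(n + 1))) · ((ln p_M)/(ln n)). -/
open Real Filter Topology

/-! Every sum occurring in `H_α`, `D_α` and `D_α*` has the form `∑ cᵢ aᵢ ^ α` with `cᵢ ≥ 0`
(for `D_α` after writing `x ^ α q ^ (1 - α) = q (x / q) ^ α` with `qᵢ = (pᵢ + 1/n) / 2`), and its
logarithm is `α ln (max aᵢ) + O(1)`, squeezed between the contribution of a maximal term and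
`(∑ cᵢ) (max aᵢ) ^ α`. After division by `α - 1` only `ln (max aᵢ)` survives: `ln pM` for `H_α`;
`ln (pM / q_M)` and `ln ((1/n) / q_m)` for `D_α`, the latter being maximal at the smallest
component; for `D_α*` the first factor tends to `(n - 1)/n`, so only `-½ ln ((n + 1)/(4n))`
remains. -/

theorem tendsto_log_sum_mul_rpow_div_atTop {ι : Type*} [Fintype ι] {c a : ι → ℝ}
    (hc : ∀ i, 0 ≤ c i) (ha : ∀ i, 0 ≤ a i) {i₀ : ι} (hc₀ : 0 < c i₀) (ha₀ : 0 < a i₀)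
    (hmax : ∀ i, a i ≤ a i₀) :
    Tendsto (fun α => log (∑ i, c i * a i ^ α) / α) atTop (𝓝 (log (a i₀))) := by
  have hterm_le (α : ℝ) : c i₀ * a i₀ ^ α ≤ ∑ i, c i * a i ^ α :=
    Finset.single_le_sum (fun i _ => mul_nonneg (hc i) (rpow_nonneg (ha i) α))
      (Finset.mem_univ i₀)
  have hterm_pos (α : ℝ) : 0 < c i₀ * a i₀ ^ α := by positivity
  have hsum_le {α : ℝ} (hα : 0 ≤ α) : ∑ i, c i * a i ^ α ≤ (∑ i, c i) * a i₀ ^ α := by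
    rw [Finset.sum_mul]
    exact Finset.sum_le_sum fun i _ =>
      mul_le_mul_of_nonneg_left (rpow_le_rpow (ha i) (hmax i) hα) (hc i)
  have hc_sum : 0 < ∑ i, c i :=
    hc₀.trans_le (Finset.single_le_sum (fun i _ => hc i) (Finset.mem_univ i₀))
  have hlog_mul (K : ℝ) (hK : 0 < K) (α : ℝ) :
      log (K * a i₀ ^ α) = log K + log (a i₀) * α := by
    rw [log_mul hK.ne' (rpow_pos_of_pos ha₀ α).ne', log_rpow ha₀]; ring
  have hsqueeze (K : ℝ) : Tendsto (fun α => K / α + log (a i₀)) atTop (𝓝 (log (a i₀))) := by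
    simpa using (tendsto_const_nhds.div_atTop tendsto_id).add_const (log (a i₀))
  refine tendsto_of_tendsto_of_tendsto_of_le_of_le' (hsqueeze (log (c i₀)))
    (hsqueeze (log (∑ i, c i))) ?_ ?_
  · filter_upwards [eventually_gt_atTop 0] with α hα
    rw [div_add' _ _ _ hα.ne', div_le_div_iff_of_pos_right hα, ← hlog_mul _ hc₀]
    exact log_le_log (hterm_pos α) (hterm_le α)
  · filter_upwards [eventually_gt_atTop 0] with α hα
    rw [div_add' _ _ _ hα.ne', div_le_div_iff_of_pos_right hα, ← hlog_mul _ hc_sum]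
    exact log_le_log ((hterm_pos α).trans_le (hterm_le α)) (hsum_le hα.le)

theorem Filter.Tendsto.div_sub_const_of_div {f : ℝ → ℝ} {L : ℝ}
    (h : Tendsto (fun α => f α / α) atTop (𝓝 L)) (c : ℝ) :
    Tendsto (fun α => f α / (α - c)) atTop (𝓝 L) := by
  have hratio : Tendsto (fun α : ℝ => 1 + c / (α - c)) atTop (𝓝 (1 + 0)) :=
    tendsto_const_nhds.add
      (tendsto_const_nhds.div_atTop (tendsto_atTop_add_const_right _ (-c) tendsto_id))
  rw [add_zero] at hratio
  simpa using (h.mul hratio).congr' <| by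
    filter_upwards [eventually_gt_atTop 0, eventually_gt_atTop c] with α hα hαc
    have : α - c ≠ 0 := sub_ne_zero.mpr hαc.ne'
    field_simp
    ring

theorem rpow_mul_rpow_one_sub {x q : ℝ} (hx : 0 ≤ x) (hq : 0 < q) (α : ℝ) :
    x ^ α * q ^ (1 - α) = q * (x / q) ^ α := by
  rw [div_rpow hx hq.le, rpow_sub hq, rpow_one]
  have : q ^ α ≠ 0 := (rpow_pos_of_pos hq α).ne'
  field_simp

theorem tendsto_renyiH_atTop {n : ℕ} {p : Fin n → ℝ} (hp : ∀ i, 0 ≤ p i) {iM : Fin n}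
    (hM : ∀ i, p i ≤ p iM) (hpos : 0 < p iM) :
    Tendsto (renyiH n p) atTop (𝓝 (-(log (p iM) / log n))) := by
  have h := (tendsto_log_sum_mul_rpow_div_atTop (fun _ => zero_le_one) hp one_pos hpos
    hM).div_sub_const_of_div 1
  simp only [one_mul] at h
  refine (h.div_const (log n)).neg.congr fun α => ?_
  rw [renyiH, one_div, mul_inv, ← neg_sub α 1, inv_neg]
  ring

theorem tendsto_renyiD_atTop {n : ℕ} (hn : 0 < n) {p : Fin n → ℝ} (hp : ∀ i, 0 ≤ p i)
    {iM im : Fin n} (hM : ∀ i, p i ≤ p iM) (hm : ∀ i, p im ≤ p i) (hpos : 0 < p iM) :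
    Tendsto (renyiD n p) atTop
      (𝓝 ((log (4 * n * p iM) - log ((n * p iM + 1) * (n * p im + 1))) / 2)) := by
  have hn' : (0 : ℝ) < n := Nat.cast_pos.mpr hn
  obtain ⟨q, hq_eq⟩ : ∃ q : Fin n → ℝ, ∀ i, q i = (p i + 1 / (n : ℝ)) / 2 := ⟨_, fun _ => rfl⟩
  have hq (i : Fin n) : 0 < q i := by rw [hq_eq]; have := hp i; positivity
  have hratio_max (i : Fin n) : p i / q i ≤ p iM / q iM := by
    rw [div_le_div_iff₀ (hq i) (hq iM), hq_eq, hq_eq]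
    nlinarith [hM i, one_div_pos.mpr hn']
  have hinv_max (i : Fin n) : 1 / (n : ℝ) / q i ≤ 1 / n / q im :=
    div_le_div_of_nonneg_left (by positivity) (hq im) (by rw [hq_eq, hq_eq]; linarith [hm i])
  have hX := (tendsto_log_sum_mul_rpow_div_atTop (fun i => (hq i).le)
    (fun i => div_nonneg (hp i) (hq i).le) (hq iM) (div_pos hpos (hq iM))
    hratio_max).div_sub_const_of_div 1
  have hY := (tendsto_log_sum_mul_rpow_div_atTop (fun i => (hq i).le)
    (fun i => div_nonneg (one_div_pos.mpr hn').le (hq i).le) (hq im)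
    (div_pos (one_div_pos.mpr hn') (hq im)) hinv_max).div_sub_const_of_div 1
  convert (hX.add hY).div_const 2 using 1
  · ext α
    have hrw : (n : ℝ) ^ (-α) = (1 / (n : ℝ)) ^ α := by
      rw [rpow_neg hn'.le, one_div, inv_rpow hn'.le]
    simp only [renyiD, ← hq_eq, hrw, rpow_mul_rpow_one_sub (hp _) (hq _),
      rpow_mul_rpow_one_sub (one_div_pos.mpr hn').le (hq _)]
    rw [one_div (2 * (α - 1)), mul_inv]
    ring
  · rw [← log_mul (div_pos hpos (hq iM)).ne' (div_pos (one_div_pos.mpr hn') (hq im)).ne',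
      ← log_div (by positivity) (by have := hp im; positivity), hq_eq, hq_eq]
    congr 3
    field_simp
    ring

theorem tendsto_renyiDstar_atTop {n : ℕ} (hn : 1 < n) :
    Tendsto (renyiDstar n) atTop (𝓝 ((log (4 * n) - log (n + 1)) / 2)) := by
  have hn' : (1 : ℝ) < n := Nat.one_lt_cast.mpr hn
  have hpow : Tendsto (fun α : ℝ => ((n : ℝ) + 1) ^ (1 - α)) atTop (𝓝 0) := by
    refine (tendsto_rpow_atBot_of_base_gt_one _ (by linarith)).comp ?_
    exact (tendsto_atBot_add_const_left _ 1 tendsto_neg_atTop_atBot).congr fun α =>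
      (sub_eq_add_neg 1 α).symm
  have hB : Tendsto (fun α : ℝ => log ((((n : ℝ) + 1) ^ (1 - α) + n - 1) / n) / (2 * (α - 1)))
      atTop (𝓝 0) := by
    have hB₀ : (0 : ℝ) < (0 + n - 1) / n := div_pos (by linarith) (by linarith)
    refine ((((hpow.add_const (n : ℝ)).sub_const 1).div_const (n : ℝ)).log hB₀.ne').div_atTop ?_
    exact (tendsto_atTop_add_const_right _ (-1) tendsto_id).const_mul_atTop two_pos
  have hr : (0 : ℝ) < (n + 1) / (4 * n) := by positivity
  have hlim : (log (4 * n) - log (n + 1)) / 2 = 0 - log (((n : ℝ) + 1) / (4 * n)) / 2 := by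
    rw [log_div (by positivity) (by positivity)]; ring
  rw [hlim]
  refine (hB.sub_const _).congr' ?_
  filter_upwards [eventually_gt_atTop 1] with α hα
  have hBpos : (0 : ℝ) < (((n : ℝ) + 1) ^ (1 - α) + n - 1) / n := by
    have := rpow_pos_of_pos (by linarith : (0 : ℝ) < n + 1) (1 - α)
    exact div_pos (by linarith) (by linarith)
  have : α - 1 ≠ 0 := sub_ne_zero.mpr hα.ne'
  rw [renyiDstar, log_mul hBpos.ne' (rpow_pos_of_pos hr _).ne', log_rpow hr]
  field_simp
  ring

theorem renyi_complexity_limit_infty_general (n : ℕ) (hn : 2 ≤ n) (p : Fin n → ℝ)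
    (hp : ∀ i, 0 ≤ p i) (hsum : ∑ i, p i = 1)
    (pM pm : ℝ) (hpM_mem : ∃ i, p i = pM) (hpM_ub : ∀ i, p i ≤ pM)
    (hpm_mem : ∃ i, p i = pm) (hpm_lb : ∀ i, pm ≤ p i) :
    Filter.Tendsto (fun α => renyiC n p α) Filter.atTop
      (nhds (((Real.log (((n : ℝ) * pM + 1) * ((n : ℝ) * pm + 1)) -
          Real.log (4 * (n : ℝ) * pM)) /
        (Real.log (4 * (n : ℝ)) - Real.log ((n : ℝ) + 1))) *
        (Real.log pM / Real.log n))) := by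
  obtain ⟨iM, rfl⟩ := hpM_mem
  obtain ⟨im, rfl⟩ := hpm_mem
  have hpos : 0 < p iM := by
    obtain ⟨i, -, hi⟩ := Finset.exists_ne_zero_of_sum_ne_zero (hsum ▸ one_ne_zero)
    exact (lt_of_le_of_ne (hp i) (Ne.symm hi)).trans_le (hpM_ub i)
  have hn' : (2 : ℝ) ≤ n := by exact_mod_cast hn
  have hlog_ne : log (4 * n) - log (n + 1) ≠ 0 :=
    (sub_pos.mpr (log_lt_log (by positivity) (by linarith))).ne'
  convert ((tendsto_renyiD_atTop (by omega) hp hpM_ub hpm_lb hpos).mul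
    (tendsto_renyiH_atTop hp hpM_ub hpos)).div (tendsto_renyiDstar_atTop hn)
    (div_ne_zero hlog_ne two_ne_zero) using 2
  · rfl
  field_simp
  ring

/-- If `p` has `r > 1` nonzero components, with maximum `pM` and minimum `pm`, then
as `α → ∞`,
`C_α(p) → ((ln((n pM + 1)(n pm + 1)) - ln(4 n pM)) / (ln(4n) - ln(n+1))) * (ln pM / ln n)`. -/
theorem renyi_complexity_limit_infty (n : ℕ) (hn : 2 ≤ n) (p : Fin n → ℝ)
    (hp : ∀ i, 0 ≤ p i) (hsum : ∑ i, p i = 1)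
    (hr : 1 < (Finset.univ.filter fun i => p i ≠ 0).card)
    (pM pm : ℝ) (hpM_mem : ∃ i, p i = pM) (hpM_ub : ∀ i, p i ≤ pM)
    (hpm_mem : ∃ i, p i = pm) (hpm_lb : ∀ i, pm ≤ p i) :
    Filter.Tendsto (fun α => renyiC n p α) Filter.atTop
      (nhds (((Real.log (((n : ℝ) * pM + 1) * ((n : ℝ) * pm + 1)) -
          Real.log (4 * (n : ℝ) * pM)) /
        (Real.log (4 * (n : ℝ)) - Real.log ((n : ℝ) + 1))) *
        (Real.log pM / Real.log n))) :=
  renyi_complexity_limit_infty_general n hn p hp hsum pM pm hpM_mem hpM_ub hpm_mem hpm_lb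
end

section
/- If the probability distribution p = (p_1, …, p_n) has r ≥ 1 nonzero components with maximum component p_M, then for every α > 1 one has (α/(1 − α)) · (ln p_M)/(ln n) ≥ H_α(p) ≥ (α/(1 − α)) · (ln p_M)/(ln n) + (ln r)/((1 − α) ln n). -/
/-
Write `S = ∑ pᵢ^α` and `r` for the number of nonzero `pᵢ`. For `α > 0` the maximal term gives
`p_M^α ≤ S`, and bounding each of the `r` nonzero terms by `p_M^α` gives `S ≤ r p_M^α`; taking
logarithms, `α ln p_M ≤ ln S ≤ α ln p_M + ln r`. Since `H_α(p) = ln S / ((1 - α) ln n)` and the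
factor `1 / ((1 - α) ln n)` is nonpositive for `α > 1`, both inequalities reverse.
-/

open Real Filter Topology

section SumRpow

variable {ι : Type*} [Fintype ι] {p : ι → ℝ} {α : ℝ}

theorem sum_rpow_le_card_ne_zero_mul (hα : 0 < α) (hp : ∀ i, 0 ≤ p i) {M : ℝ}
    (hM : ∀ i, p i ≤ M) :
    ∑ i, p i ^ α ≤ (Finset.univ.filter fun i => p i ≠ 0).card * M ^ α := by
  have hsupp : ∀ i ∈ Finset.univ, p i ^ α ≠ 0 → p i ≠ 0 := fun i _ hi hpi =>
    hi (by rw [hpi, zero_rpow hα.ne'])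
  rw [← Finset.sum_filter_of_ne hsupp, ← nsmul_eq_mul, ← Finset.sum_const]
  exact Finset.sum_le_sum fun i _ => rpow_le_rpow (hp i) (hM i) hα.le

theorem mul_log_le_log_sum_rpow (hp : ∀ i, 0 ≤ p i) {j : ι} (hj : 0 < p j) :
    α * log (p j) ≤ log (∑ i, p i ^ α) := by
  rw [← log_rpow hj]
  exact log_le_log (rpow_pos_of_pos hj α)
    (Finset.single_le_sum (fun i _ => rpow_nonneg (hp i) α) (Finset.mem_univ j))

theorem log_sum_rpow_le (hα : 0 < α) (hp : ∀ i, 0 ≤ p i) {j : ι} (hj : 0 < p j)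
    (hmax : ∀ i, p i ≤ p j) :
    log (∑ i, p i ^ α) ≤
      α * log (p j) + log ((Finset.univ.filter fun i => p i ≠ 0).card : ℝ) := by
  have hr : (0 : ℝ) < (Finset.univ.filter fun i => p i ≠ 0).card := by
    exact_mod_cast Finset.card_pos.mpr ⟨j, by simpa using hj.ne'⟩
  have hS : 0 < ∑ i, p i ^ α :=
    (rpow_pos_of_pos hj α).trans_le
      (Finset.single_le_sum (fun i _ => rpow_nonneg (hp i) α) (Finset.mem_univ j))
  rw [← log_rpow hj, add_comm, ← log_mul hr.ne' (rpow_pos_of_pos hj α).ne']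
  exact log_le_log hS (sum_rpow_le_card_ne_zero_mul hα hp hmax)

end SumRpow

theorem renyi_entropy_bounds_general (n : ℕ) (p : Fin n → ℝ)
    (hp : ∀ i, 0 ≤ p i)
    (hr : 1 ≤ (Finset.univ.filter fun i => p i ≠ 0).card)
    (pM : ℝ) (hpM_mem : ∃ i, p i = pM) (hpM_ub : ∀ i, p i ≤ pM) :
    ∀ α : ℝ, 1 < α →
      (α / (1 - α)) * (Real.log pM / Real.log n) ≥ renyiH n p α ∧
      renyiH n p α ≥ (α / (1 - α)) * (Real.log pM / Real.log n) +
        Real.log ((Finset.univ.filter fun i => p i ≠ 0).card : ℝ) / ((1 - α) * Real.log n) := by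
  intro α hα
  obtain ⟨j, rfl⟩ := hpM_mem
  have hj : 0 < p j := by
    obtain ⟨i, hi⟩ := Finset.card_pos.mp hr
    exact ((hp i).lt_of_ne' (Finset.mem_filter.mp hi).2).trans_le (hpM_ub i)
  have hc : 1 / ((1 - α) * log n) ≤ 0 :=
    one_div_nonpos.mpr (mul_nonpos_of_nonpos_of_nonneg (by linarith) (log_natCast_nonneg n))
  have hcoef : α / (1 - α) * (log (p j) / log n) = 1 / ((1 - α) * log n) * (α * log (p j)) := by
    rw [one_div, mul_inv]
    ring
  constructor
  · rw [ge_iff_le, renyiH, hcoef]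
    exact mul_le_mul_of_nonpos_left (mul_log_le_log_sum_rpow hp hj) hc
  · rw [ge_iff_le, renyiH, hcoef, ← one_div_mul_eq_div ((1 - α) * log n) (log _), ← mul_add]
    exact mul_le_mul_of_nonpos_left (log_sum_rpow_le (by linarith) hp hj hpM_ub) hc

/-- For `α > 1`, `(α/(1-α)) (ln pM / ln n) ≥ H_α(p) ≥ (α/(1-α)) (ln pM / ln n) + ln r/((1-α) ln n)`. -/
theorem renyi_entropy_bounds (n : ℕ) (hn : 2 ≤ n) (p : Fin n → ℝ)
    (hp : ∀ i, 0 ≤ p i) (hsum : ∑ i, p i = 1)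
    (hr : 1 ≤ (Finset.univ.filter fun i => p i ≠ 0).card)
    (pM : ℝ) (hpM_mem : ∃ i, p i = pM) (hpM_ub : ∀ i, p i ≤ pM) :
    ∀ α : ℝ, 1 < α →
      (α / (1 - α)) * (Real.log pM / Real.log n) ≥ renyiH n p α ∧
      renyiH n p α ≥ (α / (1 - α)) * (Real.log pM / Real.log n) +
        Real.log ((Finset.univ.filter fun i => p i ≠ 0).card : ℝ) / ((1 - α) * Real.log n) :=
  renyi_entropy_bounds_general n p hp hr pM hpM_mem hpM_ub
end

section
/- Let p = (p_1, …, p_n) be a probability distribution with maximum component p_M and minimum component p_m, and suppose p has more than one nonzero component. Then there exists α_0 > 1 such that for all α > α_0, D_α(p)/D_α* ≤ (α − 1) ln(4 n p_M / ((n p_M + 1)(n p_m + 1))) / [(α − 1) ln(4n/(n+1)) + ln(((n+1)^{1−α} + n − 1)/n)]. -/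
open Real Filter Topology

/-!
Multiplying `D_α` and `D_α*` by `2(α - 1)` clears their common prefactor. Writing
`q_i = (p_i + 1/n)/2`, the first sum in `D_α` equals `∑ p_i (p_i/q_i)^(α-1)`, which is at most
`(p_M/q_M)^(α-1)` since `t ↦ t/(t + 1/n)` is increasing, and the second sum is at most
`(n q_m)^(1-α)` since `1 - α < 0`.
The product of these two bounds is exactly `(4 n p_M / ((n p_M + 1)(n p_m + 1)))^(α-1)`.
Finally, for `n ≥ 2` and `α ≥ 2` the normalising denominator is positive, because
`4n/(n+1) > 2` while the last logarithm is at least `-log 2`.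
-/

lemma rpow_mul_rpow_one_sub_eq {x q α : ℝ} (hx : 0 ≤ x) (hq : 0 < q) (hα : α ≠ 0) :
    x ^ α * q ^ (1 - α) = x * (x / q) ^ (α - 1) := by
  rcases hx.eq_or_lt with rfl | hx
  · simp [zero_rpow hα]
  · rw [div_rpow hx.le hq.le, rpow_sub_one hx.ne', rpow_sub hq, rpow_one, rpow_sub_one hq.ne']
    field_simp

lemma sum_rpow_mul_rpow_one_sub_le {ι : Type*} (s : Finset ι) {x q : ι → ℝ} {α R : ℝ}
    (hx : ∀ i ∈ s, 0 ≤ x i) (hq : ∀ i ∈ s, 0 < q i) (hR : ∀ i ∈ s, x i / q i ≤ R)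
    (hα : 1 ≤ α) :
    ∑ i ∈ s, x i ^ α * q i ^ (1 - α) ≤ (∑ i ∈ s, x i) * R ^ (α - 1) := by
  rw [Finset.sum_mul]
  refine Finset.sum_le_sum fun i hi => ?_
  rw [rpow_mul_rpow_one_sub_eq (hx i hi) (hq i hi) (by linarith)]
  exact mul_le_mul_of_nonneg_left
    (rpow_le_rpow (div_nonneg (hx i hi) (hq i hi).le) (hR i hi) (by linarith)) (hx i hi)

lemma sum_rpow_mul_midpoint_rpow_one_sub_le {ι : Type*} [Fintype ι] {p : ι → ℝ}
    {c pM α : ℝ}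
    (hp : ∀ i, 0 ≤ p i) (hsum : ∑ i, p i = 1) (hpM : ∀ i, p i ≤ pM) (hc : 0 < c)
    (hα : 1 ≤ α) :
    ∑ i, p i ^ α * ((p i + c) / 2) ^ (1 - α) ≤ (pM / ((pM + c) / 2)) ^ (α - 1) := by
  have hratio : ∀ i ∈ Finset.univ, p i / ((p i + c) / 2) ≤ pM / ((pM + c) / 2) := by
    intro i _
    have := hp i
    rw [div_le_div_iff₀ (by positivity) (by linarith [hpM i])]
    nlinarith [hpM i]
  simpa [hsum] using sum_rpow_mul_rpow_one_sub_le Finset.univ (fun i _ => hp i)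
    (fun i _ => by linarith [hp i]) hratio hα

lemma sum_rpow_mul_midpoint_rpow_one_sub_pos {ι : Type*} [Fintype ι] {p : ι → ℝ} {c α : ℝ}
    (hp : ∀ i, 0 ≤ p i) (hsum : ∑ i, p i = 1) (hc : 0 < c) :
    0 < ∑ i, p i ^ α * ((p i + c) / 2) ^ (1 - α) := by
  obtain ⟨i₀, -, hi₀⟩ : ∃ i ∈ Finset.univ, (0 : ℝ) < p i :=
    Finset.exists_lt_of_sum_lt (by simp [hsum])
  refine Finset.sum_pos' (fun i _ => ?_) ⟨i₀, Finset.mem_univ _, by positivity⟩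
  have := hp i
  positivity

lemma sum_mul_midpoint_rpow_one_sub_le {n : ℕ} {p : Fin n → ℝ} {pm α : ℝ} (hn : 0 < n)
    (hpm₀ : 0 ≤ pm) (hpm : ∀ i, pm ≤ p i) (hα : 1 ≤ α) :
    ∑ i, (n : ℝ) ^ (-α) * ((p i + 1 / n) / 2) ^ (1 - α) ≤
      (n * ((pm + 1 / n) / 2)) ^ (1 - α) := by
  have hn' : (0 : ℝ) < n := by exact_mod_cast hn
  calc ∑ i, (n : ℝ) ^ (-α) * ((p i + 1 / n) / 2) ^ (1 - α)
      ≤ ∑ _i : Fin n, (n : ℝ) ^ (-α) * ((pm + 1 / n) / 2) ^ (1 - α) := by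
        refine Finset.sum_le_sum fun i _ => mul_le_mul_of_nonneg_left ?_ (by positivity)
        exact rpow_le_rpow_of_nonpos (by positivity) (by linarith [hpm i]) (by linarith)
    _ = (n * ((pm + 1 / n) / 2)) ^ (1 - α) := by
        rw [Finset.sum_const, Finset.card_univ, Fintype.card_fin, nsmul_eq_mul, ← mul_assoc,
          mul_rpow hn'.le (by positivity), rpow_sub hn', rpow_one, rpow_neg hn'.le]
        field_simp

lemma two_mul_sub_one_mul_renyiD (n : ℕ) (p : Fin n → ℝ) {α : ℝ} (hα : α ≠ 1) :
    2 * (α - 1) * renyiD n p α =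
      log (∑ i, p i ^ α * ((p i + 1 / (n : ℝ)) / 2) ^ (1 - α)) +
        log (∑ i, (n : ℝ) ^ (-α) * ((p i + 1 / (n : ℝ)) / 2) ^ (1 - α)) := by
  have : α - 1 ≠ 0 := sub_ne_zero.mpr hα
  rw [renyiD]
  field_simp

lemma two_mul_sub_one_mul_renyiDstar {n : ℕ} (hn : 0 < n) {α : ℝ} (hα : α ≠ 1) :
    2 * (α - 1) * renyiDstar n α =
      (α - 1) * log (4 * n / (n + 1)) + log ((((n : ℝ) + 1) ^ (1 - α) + n - 1) / n) := by
  have hn' : (0 : ℝ) < n := by exact_mod_cast hn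
  have hn₁ : (1 : ℝ) ≤ n := by exact_mod_cast hn
  have : α - 1 ≠ 0 := sub_ne_zero.mpr hα
  have hF : 0 < (((n : ℝ) + 1) ^ (1 - α) + n - 1) / n := by
    have : (0 : ℝ) < ((n : ℝ) + 1) ^ (1 - α) := by positivity
    exact div_pos (by linarith) hn'
  rw [renyiDstar, log_mul hF.ne' (by positivity), log_rpow (by positivity),
    ← inv_div (4 * (n : ℝ)), log_inv]
  field_simp
  ring

lemma renyiDstar_bracket_pos {n : ℕ} (hn : 2 ≤ n) {α : ℝ} (hα : 2 ≤ α) :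
    0 < (α - 1) * log (4 * n / (n + 1)) + log ((((n : ℝ) + 1) ^ (1 - α) + n - 1) / n) := by
  have hn' : (2 : ℝ) ≤ n := by exact_mod_cast hn
  have hlog2 : log 2 < log (4 * n / (n + 1)) :=
    log_lt_log two_pos (by rw [lt_div_iff₀ (by positivity)]; linarith)
  have hhalf : log 2⁻¹ ≤ log ((((n : ℝ) + 1) ^ (1 - α) + n - 1) / n) := by
    have : (0 : ℝ) < ((n : ℝ) + 1) ^ (1 - α) := by positivity
    refine log_le_log (by norm_num) ?_
    rw [le_div_iff₀ (by positivity)]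
    linarith
  rw [log_inv] at hhalf
  nlinarith [log_pos (by norm_num : (1 : ℝ) < 2)]

theorem renyi_ratio_upper_bound_general (n : ℕ) (hn : 2 ≤ n) (p : Fin n → ℝ)
    (hp : ∀ i, 0 ≤ p i) (hsum : ∑ i, p i = 1)
    (pM pm : ℝ) (hpM_ub : ∀ i, p i ≤ pM)
    (hpm_mem : ∃ i, p i = pm) (hpm_lb : ∀ i, pm ≤ p i) :
    ∃ α₀ : ℝ, 1 < α₀ ∧ ∀ α : ℝ, α₀ < α →
      renyiD n p α / renyiDstar n α ≤
        ((α - 1) * Real.log (4 * (n : ℝ) * pM / (((n : ℝ) * pM + 1) * ((n : ℝ) * pm + 1)))) /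
        ((α - 1) * Real.log (4 * (n : ℝ) / ((n : ℝ) + 1)) +
          Real.log (((((n : ℝ) + 1) ^ (1 - α) + (n : ℝ) - 1) / (n : ℝ)))) := by
  obtain ⟨im, rfl⟩ := hpm_mem
  have hpm₀ := hp im
  have hn₀ : 0 < n := by omega
  have hn' : (0 : ℝ) < n := by exact_mod_cast hn₀
  have hpM : 1 ≤ n * pM := by
    simpa [hsum] using Finset.sum_le_sum fun i (_ : i ∈ Finset.univ) => hpM_ub i
  have hpM₀ : 0 < pM := pos_of_mul_pos_right (by linarith) hn'.le
  refine ⟨2, one_lt_two, fun α hα => ?_⟩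
  have hα₁ : α ≠ 1 := by linarith
  rw [← mul_div_mul_left _ _ (by simpa [sub_eq_zero] using hα₁ : 2 * (α - 1) ≠ 0),
    two_mul_sub_one_mul_renyiD n p hα₁, two_mul_sub_one_mul_renyiDstar hn₀ hα₁]
  refine div_le_div_of_nonneg_right ?_ (renyiDstar_bracket_pos hn hα.le).le
  have hA := sum_rpow_mul_midpoint_rpow_one_sub_pos (α := α) hp hsum (one_div_pos.mpr hn')
  have hB : 0 < ∑ i, (n : ℝ) ^ (-α) * ((p i + 1 / (n : ℝ)) / 2) ^ (1 - α) :=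
    Finset.sum_pos (fun i _ => by have := hp i; positivity) ⟨⟨0, hn₀⟩, Finset.mem_univ _⟩
  rw [← log_mul hA.ne' hB.ne', ← log_rpow (by positivity)]
  refine log_le_log (mul_pos hA hB) ?_
  calc _ ≤ (pM / ((pM + 1 / n) / 2)) ^ (α - 1) * (n * ((p im + 1 / n) / 2)) ^ (1 - α) :=
        mul_le_mul
          (sum_rpow_mul_midpoint_rpow_one_sub_le hp hsum hpM_ub (by positivity) (by linarith))
          (sum_mul_midpoint_rpow_one_sub_le hn₀ hpm₀ hpm_lb (by linarith)) hB.le (by positivity)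
    _ = _ := by
        rw [show 1 - α = -(α - 1) by ring, rpow_neg (by positivity), ← div_eq_mul_inv,
          ← div_rpow (by positivity) (by positivity)]
        congr 1
        field_simp
        ring

/-- Upper bound for `D_α(p)/D_α^*` for sufficiently large `α`. -/
theorem renyi_ratio_upper_bound (n : ℕ) (hn : 2 ≤ n) (p : Fin n → ℝ)
    (hp : ∀ i, 0 ≤ p i) (hsum : ∑ i, p i = 1)
    (hr : 1 < (Finset.univ.filter fun i => p i ≠ 0).card)
    (pM pm : ℝ) (hpM_mem : ∃ i, p i = pM) (hpM_ub : ∀ i, p i ≤ pM)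
    (hpm_mem : ∃ i, p i = pm) (hpm_lb : ∀ i, pm ≤ p i) :
    ∃ α₀ : ℝ, 1 < α₀ ∧ ∀ α : ℝ, α₀ < α →
      renyiD n p α / renyiDstar n α ≤
        ((α - 1) * Real.log (4 * (n : ℝ) * pM / (((n : ℝ) * pM + 1) * ((n : ℝ) * pm + 1)))) /
        ((α - 1) * Real.log (4 * (n : ℝ) / ((n : ℝ) + 1)) +
          Real.log (((((n : ℝ) + 1) ^ (1 - α) + (n : ℝ) - 1) / (n : ℝ)))) :=
  renyi_ratio_upper_bound_general n hn p hp hsum pM pm hpM_ub hpm_mem hpm_lb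
end

section
/- Let p = (p_1, …, p_n) be a probability distribution with maximum component p_M and minimum component p_m, and suppose p has more than one nonzero component. Then there exists α_0 > 1 such that for all α > α_0, D_α(p)/D_α* ≥ [(α − 1) ln(4 n p_M / ((n p_M + 1)(n p_m + 1))) + ln(p_M/n)] / [(α − 1) ln(4n/(n+1)) + ln(((n+1)^{1−α} + n − 1)/n)]. -/
open Real Filter Topology

/-!
Both sums in `D_α(p)` are sums of nonnegative terms, so each is bounded below by a single term:
the first by the term of a maximal component `p_M`, the second by the term of a minimal
component `p_m`. Taking logarithms, these two terms give exactly the numerator of the bound.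
After cancelling the common factor `1 / (2 (α - 1))`, the normalization `D_α^*` becomes the
denominator of the bound, which is positive as soon as `(α - 1) ln (4n / (n + 1)) > ln n`,
because the second logarithm there is at least `-ln n`.
-/

lemma Real.log_le_log_sum {ι : Type*} [Fintype ι] {f : ι → ℝ} (hf : ∀ j, 0 ≤ f j) {i : ι}
    (hi : 0 < f i) : Real.log (f i) ≤ Real.log (∑ j, f j) :=
  Real.log_le_log hi (Finset.single_le_sum (fun j _ => hf j) (Finset.mem_univ i))

lemma log_four_mul_div_mul_add_one {N x y : ℝ} (hN : 0 < N) (hx : 0 < x) (hy : 0 ≤ y) :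
    Real.log (4 * N * x / ((N * x + 1) * (N * y + 1))) =
      Real.log x - Real.log N - Real.log ((x + 1 / N) / 2) - Real.log ((y + 1 / N) / 2) := by
  have hmid : 4 * N * x / ((N * x + 1) * (N * y + 1)) =
      x / (N * ((x + 1 / N) / 2) * ((y + 1 / N) / 2)) := by
    field_simp
    ring
  rw [hmid, Real.log_div hx.ne' (by positivity), Real.log_mul (by positivity) (by positivity),
    Real.log_mul hN.ne' (by positivity)]
  ring

lemma log_four_mul_div_add_one_pos {N : ℝ} (hN : 1 / 3 < N) : 0 < Real.log (4 * N / (N + 1)) :=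
  Real.log_pos <| (one_lt_div (by linarith)).mpr (by linarith)

lemma neg_log_le_log_renyiDstar_term {N : ℝ} (hN : 2 ≤ N) (α : ℝ) :
    -Real.log N ≤ Real.log (((N + 1) ^ (1 - α) + N - 1) / N) := by
  have hpow : 0 ≤ (N + 1) ^ (1 - α) := Real.rpow_nonneg (by linarith) _
  rw [← Real.log_inv, ← one_div]
  exact Real.log_le_log (by positivity) (by gcongr; linarith)

section renyi

variable {n : ℕ} (p : Fin n → ℝ) (α : ℝ)

lemma renyiD_div_renyiDstar (hn : 0 < n) (hα : α ≠ 1) :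
    renyiD n p α / renyiDstar n α =
      (Real.log (∑ i, p i ^ α * ((p i + 1 / (n : ℝ)) / 2) ^ (1 - α)) +
        Real.log (∑ i, (n : ℝ) ^ (-α) * ((p i + 1 / (n : ℝ)) / 2) ^ (1 - α))) /
      ((α - 1) * Real.log (4 * (n : ℝ) / ((n : ℝ) + 1)) +
        Real.log ((((n : ℝ) + 1) ^ (1 - α) + (n : ℝ) - 1) / (n : ℝ))) := by
  have hN : (1 : ℝ) ≤ n := by exact_mod_cast hn
  have hA : 0 < (((n : ℝ) + 1) ^ (1 - α) + n - 1) / n := by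
    have : 0 < ((n : ℝ) + 1) ^ (1 - α) := Real.rpow_pos_of_pos (by linarith) _
    exact div_pos (by linarith) (by linarith)
  have hlogB : Real.log ((((n : ℝ) + 1) / (4 * n)) ^ (1 - α)) =
      (α - 1) * Real.log (4 * (n : ℝ) / ((n : ℝ) + 1)) := by
    rw [Real.log_rpow (by positivity), ← inv_div, Real.log_inv]
    ring
  have hc : 1 / (2 * (α - 1)) ≠ 0 := by
    simpa [sub_eq_zero] using hα
  rw [renyiD, renyiDstar, Real.log_mul hA.ne' (Real.rpow_pos_of_pos (by positivity) _).ne',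
    hlogB, mul_div_mul_left _ _ hc]
  ring

variable {p}

lemma le_log_renyiD_sums (hn : 0 < n) (hp : ∀ i, 0 ≤ p i) {i j : Fin n} (hi : 0 < p i) :
    (α - 1) * Real.log (4 * (n : ℝ) * p i / (((n : ℝ) * p i + 1) * ((n : ℝ) * p j + 1))) +
        Real.log (p i / (n : ℝ)) ≤
      Real.log (∑ i, p i ^ α * ((p i + 1 / (n : ℝ)) / 2) ^ (1 - α)) +
        Real.log (∑ i, (n : ℝ) ^ (-α) * ((p i + 1 / (n : ℝ)) / 2) ^ (1 - α)) := by
  have hN : (0 : ℝ) < n := by exact_mod_cast hn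
  have hmid : ∀ k, 0 < (p k + 1 / (n : ℝ)) / 2 := fun k => by have := hp k; positivity
  have hS₁ := Real.log_le_log_sum
    (f := fun k => p k ^ α * ((p k + 1 / (n : ℝ)) / 2) ^ (1 - α))
    (fun k => mul_nonneg (Real.rpow_nonneg (hp k) _) (Real.rpow_nonneg (hmid k).le _))
    (mul_pos (Real.rpow_pos_of_pos hi _) (Real.rpow_pos_of_pos (hmid i) _))
  have hS₂ := Real.log_le_log_sum
    (f := fun k => (n : ℝ) ^ (-α) * ((p k + 1 / (n : ℝ)) / 2) ^ (1 - α))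
    (fun k => mul_nonneg (Real.rpow_nonneg hN.le _) (Real.rpow_nonneg (hmid k).le _))
    (mul_pos (Real.rpow_pos_of_pos hN _) (Real.rpow_pos_of_pos (hmid j) _)) (i := j)
  rw [Real.log_mul (Real.rpow_pos_of_pos hi _).ne' (Real.rpow_pos_of_pos (hmid i) _).ne',
    Real.log_rpow hi, Real.log_rpow (hmid i)] at hS₁
  rw [Real.log_mul (Real.rpow_pos_of_pos hN _).ne' (Real.rpow_pos_of_pos (hmid j) _).ne',
    Real.log_rpow hN, Real.log_rpow (hmid j)] at hS₂
  rw [log_four_mul_div_mul_add_one hN hi (hp j), Real.log_div hi.ne' hN.ne']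
  linarith

end renyi

theorem renyi_ratio_lower_bound_general (n : ℕ) (hn : 2 ≤ n) (p : Fin n → ℝ)
    (hp : ∀ i, 0 ≤ p i) (hsum : ∑ i, p i = 1)
    (pM pm : ℝ) (hpM_mem : ∃ i, p i = pM) (hpM_ub : ∀ i, p i ≤ pM)
    (hpm_mem : ∃ i, p i = pm) :
    ∃ α₀ : ℝ, 1 < α₀ ∧ ∀ α : ℝ, α₀ < α →
      renyiD n p α / renyiDstar n α ≥
        ((α - 1) * Real.log (4 * (n : ℝ) * pM / (((n : ℝ) * pM + 1) * ((n : ℝ) * pm + 1))) +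
          Real.log (pM / (n : ℝ))) /
        ((α - 1) * Real.log (4 * (n : ℝ) / ((n : ℝ) + 1)) +
          Real.log (((((n : ℝ) + 1) ^ (1 - α) + (n : ℝ) - 1) / (n : ℝ)))) := by
  obtain ⟨iM, rfl⟩ := hpM_mem
  obtain ⟨im, rfl⟩ := hpm_mem
  have hN : (2 : ℝ) ≤ n := by exact_mod_cast hn
  have hpM_pos : 0 < p iM := by
    by_contra! h
    have : ∑ i, p i ≤ 0 := Finset.sum_nonpos fun i _ => (hpM_ub i).trans h
    linarith
  have hL := log_four_mul_div_add_one_pos (N := (n : ℝ)) (by linarith)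
  have hlogn : 0 < Real.log n := Real.log_pos (by linarith)
  refine ⟨1 + Real.log n / Real.log (4 * n / (n + 1)), by linarith [div_pos hlogn hL], ?_⟩
  intro α hα
  have hα1 : 1 < α := by linarith [div_pos hlogn hL]
  have hdenom : 0 < (α - 1) * Real.log (4 * (n : ℝ) / ((n : ℝ) + 1)) +
      Real.log ((((n : ℝ) + 1) ^ (1 - α) + (n : ℝ) - 1) / (n : ℝ)) := by
    have := (div_lt_iff₀ hL).mp (by linarith : Real.log n / Real.log (4 * n / (n + 1)) < α - 1)
    linarith [neg_log_le_log_renyiDstar_term (N := (n : ℝ)) (by linarith) α]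
  rw [renyiD_div_renyiDstar p α (by omega) hα1.ne', ge_iff_le]
  exact div_le_div_of_nonneg_right (le_log_renyiD_sums α (by omega) hp hpM_pos) hdenom.le

/-- Lower bound for `D_α(p)/D_α^*` for sufficiently large `α`. -/
theorem renyi_ratio_lower_bound (n : ℕ) (hn : 2 ≤ n) (p : Fin n → ℝ)
    (hp : ∀ i, 0 ≤ p i) (hsum : ∑ i, p i = 1)
    (hr : 1 < (Finset.univ.filter fun i => p i ≠ 0).card)
    (pM pm : ℝ) (hpM_mem : ∃ i, p i = pM) (hpM_ub : ∀ i, p i ≤ pM)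
    (hpm_mem : ∃ i, p i = pm) (hpm_lb : ∀ i, pm ≤ p i) :
    ∃ α₀ : ℝ, 1 < α₀ ∧ ∀ α : ℝ, α₀ < α →
      renyiD n p α / renyiDstar n α ≥
        ((α - 1) * Real.log (4 * (n : ℝ) * pM / (((n : ℝ) * pM + 1) * ((n : ℝ) * pm + 1))) +
          Real.log (pM / (n : ℝ))) /
        ((α - 1) * Real.log (4 * (n : ℝ) / ((n : ℝ) + 1)) +
          Real.log (((((n : ℝ) + 1) ^ (1 - α) + (n : ℝ) - 1) / (n : ℝ)))) :=
  renyi_ratio_lower_bound_general n hn p hp hsum pM pm hpM_mem hpM_ub hpm_mem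
end

section
/- If every component of the probability distribution p = (p_1, …, p_n) is strictly positive, then the Rényi complexity-entropy curve begins at the point (1, 0): the limit of H_α(p) as α tends to 0 from the right equals 1, and the limit of C_α(p) as α tends to 0 from the right equals 0. -/
/-!
For a strictly positive `p`, every power `p i ^ α`, `n ^ (-α)`, `((p i + 1/n)/2) ^ (1 - α)` is
continuous in `α`, and all arguments of the logarithms stay positive, so `H`, `D` and `D*` are
continuous away from `α = 1`; the limits as `α → 0⁺` are therefore the values at `α = 0`.
There `p i ^ 0 = 1` gives `H₀ = log n / log n = 1`, both sums in `D₀` collapse to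
`∑ (p i + 1/n)/2 = 1`, so `D₀ = 0`, while `D*₀ = -½ log ((n+1)/(2n)) > 0`. Hence `C₀ = 0`.
-/

open Real Filter Topology

section
variable {n : ℕ} {p : Fin n → ℝ} {α : ℝ}

lemma continuousAt_renyiH (hn : 2 ≤ n) (hpos : ∀ i, 0 < p i) (hα : α ≠ 1) :
    ContinuousAt (renyiH n p) α := by
  have : Nonempty (Fin n) := ⟨⟨0, by omega⟩⟩
  have hsum : ∑ i, p i ^ α ≠ 0 :=
    (Finset.sum_pos (fun i _ => rpow_pos_of_pos (hpos i) α) Finset.univ_nonempty).ne'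
  have hden : (1 - α) * Real.log n ≠ 0 :=
    mul_ne_zero (sub_ne_zero.2 hα.symm) (Real.log_pos (by exact_mod_cast hn)).ne'
  have hcont : ContinuousAt (fun α : ℝ => ∑ i, p i ^ α) α := by
    fun_prop (disch := exact (hpos _).ne')
  unfold renyiH
  fun_prop (disch := assumption)

lemma renyiH_zero (hn : 2 ≤ n) : renyiH n p 0 = 1 := by
  have : Real.log n ≠ 0 := (Real.log_pos (by exact_mod_cast hn)).ne'
  simp [renyiH, this]

lemma sum_midpoint_uniform_eq_one (hn : n ≠ 0) (hsum : ∑ i, p i = 1) :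
    ∑ i, (p i + 1 / (n : ℝ)) / 2 = 1 := by
  rw [← Finset.sum_div, Finset.sum_add_distrib, hsum]
  simp [hn]

lemma continuousAt_renyiD (hn : 0 < n) (hpos : ∀ i, 0 < p i) (hα : α ≠ 1) :
    ContinuousAt (renyiD n p) α := by
  have : Nonempty (Fin n) := ⟨⟨0, hn⟩⟩
  have hcross : ∑ i, p i ^ α * ((p i + 1 / (n : ℝ)) / 2) ^ (1 - α) ≠ 0 :=
    (Finset.sum_pos (fun i _ => by have := hpos i; positivity) Finset.univ_nonempty).ne'
  have hunif : ∑ i, (n : ℝ) ^ (-α) * ((p i + 1 / (n : ℝ)) / 2) ^ (1 - α) ≠ 0 :=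
    (Finset.sum_pos (fun i _ => by have := hpos i; positivity) Finset.univ_nonempty).ne'
  have hcont₁ : ContinuousAt
      (fun α : ℝ => ∑ i, p i ^ α * ((p i + 1 / (n : ℝ)) / 2) ^ (1 - α)) α := by
    fun_prop (disch := have := hpos ‹_›; positivity)
  have hcont₂ : ContinuousAt
      (fun α : ℝ => ∑ i, (n : ℝ) ^ (-α) * ((p i + 1 / (n : ℝ)) / 2) ^ (1 - α)) α := by
    fun_prop (disch := first | positivity | (have := hpos ‹_›; positivity))
  have hden : 2 * (α - 1) ≠ 0 := mul_ne_zero two_ne_zero (sub_ne_zero.2 hα)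
  unfold renyiD
  fun_prop (disch := assumption)

lemma renyiD_zero (hn : n ≠ 0) (hsum : ∑ i, p i = 1) : renyiD n p 0 = 0 := by
  simp only [renyiD, Real.rpow_zero, sub_zero, Real.rpow_one, neg_zero, one_mul,
    sum_midpoint_uniform_eq_one hn hsum, Real.log_one, add_zero, mul_zero]

lemma continuousAt_renyiDstar (hn : 0 < n) (hα : α ≠ 1) : ContinuousAt (renyiDstar n) α := by
  have hn₁ : (1 : ℝ) ≤ n := by exact_mod_cast hn
  have harg : (((n : ℝ) + 1) ^ (1 - α) + (n : ℝ) - 1) / (n : ℝ) *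
      (((n : ℝ) + 1) / (4 * (n : ℝ))) ^ (1 - α) ≠ 0 := by
    have : 0 < ((n : ℝ) + 1) ^ (1 - α) := by positivity
    have : 0 < ((n : ℝ) + 1) ^ (1 - α) + (n : ℝ) - 1 := by linarith
    positivity
  have hden : 2 * (α - 1) ≠ 0 := mul_ne_zero two_ne_zero (sub_ne_zero.2 hα)
  have hcont : ContinuousAt
      (fun α : ℝ => (((n : ℝ) + 1) ^ (1 - α) + (n : ℝ) - 1) / (n : ℝ) *
        (((n : ℝ) + 1) / (4 * (n : ℝ))) ^ (1 - α)) α := by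
    fun_prop (disch := positivity)
  unfold renyiDstar
  fun_prop (disch := assumption)

lemma renyiDstar_zero_pos (hn : 2 ≤ n) : 0 < renyiDstar n 0 := by
  have hn₂ : (2 : ℝ) ≤ n := by exact_mod_cast hn
  have hval : renyiDstar n 0 = -(1 / 2) * Real.log (((n : ℝ) + 1) / (2 * n)) := by
    simp only [renyiDstar, sub_zero, Real.rpow_one]
    congr 1
    · norm_num
    · congr 1; field_simp; ring
  rw [hval]
  have : Real.log (((n : ℝ) + 1) / (2 * n)) < 0 :=
    Real.log_neg (by positivity) (by rw [div_lt_one (by positivity)]; linarith)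
  linarith
end

theorem renyi_curve_starts_at_one_zero_general (n : ℕ) (hn : 2 ≤ n) (p : Fin n → ℝ)
    (hsum : ∑ i, p i = 1)
    (hpos : ∀ i, 0 < p i) :
    Filter.Tendsto (fun α => renyiH n p α) (nhdsWithin 0 (Set.Ioi 0)) (nhds 1) ∧
    Filter.Tendsto (fun α => renyiC n p α) (nhdsWithin 0 (Set.Ioi 0)) (nhds 0) := by
  have hH := continuousAt_renyiH hn hpos zero_ne_one
  have hC : ContinuousAt (renyiC n p) 0 :=
    ((continuousAt_renyiD (by omega) hpos zero_ne_one).mul hH).div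
      (continuousAt_renyiDstar (by omega) zero_ne_one) (renyiDstar_zero_pos hn).ne'
  constructor
  · simpa [renyiH_zero hn] using hH.tendsto.mono_left nhdsWithin_le_nhds
  · have hC0 : renyiC n p 0 = 0 := by simp [renyiC, renyiD_zero (by omega) hsum]
    simpa [hC0] using hC.tendsto.mono_left nhdsWithin_le_nhds

/-- If every component of `p` is strictly positive, the Rényi complexity-entropy curve
begins at the point `(1, 0)` as `α → 0⁺`. -/
theorem renyi_curve_starts_at_one_zero (n : ℕ) (hn : 2 ≤ n) (p : Fin n → ℝ)
    (hp : ∀ i, 0 ≤ p i) (hsum : ∑ i, p i = 1)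
    (hpos : ∀ i, 0 < p i) :
    Filter.Tendsto (fun α => renyiH n p α) (nhdsWithin 0 (Set.Ioi 0)) (nhds 1) ∧
    Filter.Tendsto (fun α => renyiC n p α) (nhdsWithin 0 (Set.Ioi 0)) (nhds 0) :=
  renyi_curve_starts_at_one_zero_general n hn p hsum hpos
end

section
/- Let p = (p_1, …, p_n) be a probability distribution with maximum component p_M satisfying 0 < p_M < 1 and minimum component p_m. Define h_f = −(ln p_M)/(ln n) and c_f = ((ln((n p_M + 1)(n p_m + 1)) − ln(4 n p_M))/(ln(4n) − ln(n + 1))) · ((ln p_M)/(ln n)) (these are the limits of H_α(p) and C_α(p) as α → ∞). Then the minimum component can be recovered from the curve's endpoint by p_m = (4 p_M/(n p_M + 1)) · ((n + 1)/(4n))^{c_f/h_f} − 1/n. -/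
open Real Filter Topology

/-! As `α → ∞` both coordinates of the endpoint carry the factor `log pM / log n`, which
cancels in `c_f / h_f`. What remains is the base-`(n+1)/(4n)` logarithm of
`(n pM + 1)(n pm + 1)/(4 n pM)`, so raising the base to `c_f / h_f` returns this quotient,
and it is affine in `pm`. -/

lemma mul_div_div_neg_self {a L l : ℝ} (hL : L ≠ 0) (hl : l ≠ 0) :
    a * (L / l) / (-L / l) = -a := by
  field_simp

lemma neg_log_sub_div_log_sub_eq_logb {a b c d : ℝ} (ha : 0 < a) (hb : 0 < b) (hc : 0 < c)
    (hd : 0 < d) :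
    -((log a - log b) / (log c - log d)) = logb (d / c) (a / b) := by
  rw [logb, log_div ha.ne' hb.ne', log_div hd.ne' hc.ne', ← div_neg, neg_sub]

lemma endpoint_exponent_eq_logb {n pM pm : ℝ} (hn : 1 < n) (hpM_pos : 0 < pM) (hpM_ne : pM ≠ 1)
    (hpm : 0 ≤ pm) :
    (log ((n * pM + 1) * (n * pm + 1)) - log (4 * n * pM)) / (log (4 * n) - log (n + 1)) *
        (log pM / log n) / (-log pM / log n) =
      logb ((n + 1) / (4 * n)) ((n * pM + 1) * (n * pm + 1) / (4 * n * pM)) := by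
  have hn0 : 0 < n := by linarith
  rw [mul_div_div_neg_self (log_ne_zero_of_pos_of_ne_one hpM_pos hpM_ne) (log_pos hn).ne']
  exact neg_log_sub_div_log_sub_eq_logb (by positivity) (by positivity) (by positivity)
    (by positivity)

lemma endpoint_quotient_inversion {n pM pm : ℝ} (hn : n ≠ 0) (hpM : pM ≠ 0)
    (hnpM : n * pM + 1 ≠ 0) :
    pm = 4 * pM / (n * pM + 1) * ((n * pM + 1) * (n * pm + 1) / (4 * n * pM)) - 1 / n := by
  rw [div_mul_div_comm, mul_left_comm, mul_div_mul_left _ _ hnpM]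
  field_simp
  ring

theorem renyi_endpoint_recovers_min_general (n : ℕ) (hn : 2 ≤ n) (p : Fin n → ℝ)
    (hp : ∀ i, 0 ≤ p i)
    (pM pm : ℝ)
    (hpM_pos : 0 < pM) (hpM_lt : pM < 1)
    (hpm_mem : ∃ i, p i = pm)
    (hf cf : ℝ)
    (hhf : hf = -(Real.log pM) / Real.log n)
    (hcf : cf = ((Real.log (((n : ℝ) * pM + 1) * ((n : ℝ) * pm + 1)) -
        Real.log (4 * (n : ℝ) * pM)) /
      (Real.log (4 * (n : ℝ)) - Real.log ((n : ℝ) + 1))) * (Real.log pM / Real.log n)) :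
    pm = (4 * pM / ((n : ℝ) * pM + 1)) * (((n : ℝ) + 1) / (4 * (n : ℝ))) ^ (cf / hf) -
      1 / (n : ℝ) := by
  obtain ⟨i, rfl⟩ := hpm_mem
  have hn1 : (1 : ℝ) < n := by exact_mod_cast hn
  have hn0 : (0 : ℝ) < n := by linarith
  have hbase : ((n : ℝ) + 1) / (4 * n) < 1 := by rw [div_lt_one (by positivity)]; linarith
  rw [hhf, hcf, endpoint_exponent_eq_logb hn1 hpM_pos hpM_lt.ne (hp i),
    rpow_logb (by positivity) hbase.ne (by have := hp i; positivity)]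
  exact endpoint_quotient_inversion hn0.ne' hpM_pos.ne' (by positivity)

/-- The minimum component `pm` is recovered from the endpoint `(h_f, c_f)` of the curve. -/
theorem renyi_endpoint_recovers_min (n : ℕ) (hn : 2 ≤ n) (p : Fin n → ℝ)
    (hp : ∀ i, 0 ≤ p i) (hsum : ∑ i, p i = 1)
    (pM pm : ℝ) (hpM_mem : ∃ i, p i = pM) (hpM_ub : ∀ i, p i ≤ pM)
    (hpM_pos : 0 < pM) (hpM_lt : pM < 1)
    (hpm_mem : ∃ i, p i = pm) (hpm_lb : ∀ i, pm ≤ p i)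
    (hf cf : ℝ)
    (hhf : hf = -(Real.log pM) / Real.log n)
    (hcf : cf = ((Real.log (((n : ℝ) * pM + 1) * ((n : ℝ) * pm + 1)) -
        Real.log (4 * (n : ℝ) * pM)) /
      (Real.log (4 * (n : ℝ)) - Real.log ((n : ℝ) + 1))) * (Real.log pM / Real.log n)) :
    pm = (4 * pM / ((n : ℝ) * pM + 1)) * (((n : ℝ) + 1) / (4 * (n : ℝ))) ^ (cf / hf) -
      1 / (n : ℝ) :=
  renyi_endpoint_recovers_min_general n hn p hp pM pm hpM_pos hpM_lt hpm_mem hf cf hhf hcf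
end

section
/- For every probability distribution p = (p_1, …, p_n) and every α > 0 with α ≠ 1, the Rényi statistical complexity satisfies 0 ≤ C_α(p) ≤ 1. -/
/-!
Write `m = (p + u) / 2` for the midpoint of `p` and the uniform distribution `u`, so that
`D_α(p) = (log A + log B) / (2 (α - 1))` with `A = ∑ pᵢ^α mᵢ^(1-α)` and `B = ∑ uᵢ^α mᵢ^(1-α)`.
By the weighted AM-GM inequality `x^α y^(1-α) ≤ α x + (1 - α) y`, reversed for `α > 1`,
`∑ xᵢ^α yᵢ^(1-α)` is at most `1` for any two distributions `x`, `y` when `α < 1` and at least `1`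
when `α > 1`. Applied to `(p, m)`, `(u, m)` and `(p, u)` this gives `0 ≤ D_α` and, together with
`1 ≤ ∑ pᵢ^α` (reversed for `α > 1`), `0 ≤ H_α ≤ 1`. For `D_α ≤ D_α*`, the estimate
`mᵢ ≥ pᵢ (1 + 1/n) / 2` bounds `A` termwise, and concavity of `t ↦ t^(1-α)` (convexity for
`α > 1`) bounds `mᵢ^(1-α)`, affine in `pᵢ ∈ [0, 1]`, by its chord, which bounds `B`.
-/

open Real Filter Topology

namespace Real

theorem convexOn_rpow_of_nonpos {p : ℝ} (hp : p ≤ 0) :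
    ConvexOn ℝ (Set.Ioi 0) fun x : ℝ ↦ x ^ p := by
  refine ⟨convex_Ioi 0, fun x hx y hy a b ha hb hab ↦ ?_⟩
  have hmix : 0 < a * x + b * y := convex_Ioi (0 : ℝ) hx hy ha hb hab
  have hlog : a * log x + b * log y ≤ log (a * x + b * y) :=
    strictConcaveOn_log_Ioi.concaveOn.2 hx hy ha hb hab
  simp only [smul_eq_mul]
  calc (a * x + b * y) ^ p = exp (log (a * x + b * y) * p) := rpow_def_of_pos hmix p
    _ ≤ exp (a * (log x * p) + b * (log y * p)) := by
        rw [exp_le_exp]; linarith [mul_le_mul_of_nonpos_right hlog hp]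
    _ ≤ a * exp (log x * p) + b * exp (log y * p) :=
        convexOn_exp.2 (Set.mem_univ _) (Set.mem_univ _) ha hb hab
    _ = a * x ^ p + b * y ^ p := by rw [rpow_def_of_pos hx, rpow_def_of_pos hy]

theorem rpow_mul_rpow_one_sub_le {α x y : ℝ} (hα₀ : 0 ≤ α) (hα₁ : α ≤ 1) (hx : 0 ≤ x)
    (hy : 0 ≤ y) : x ^ α * y ^ (1 - α) ≤ α * x + (1 - α) * y :=
  geom_mean_le_arith_mean2_weighted hα₀ (by linarith) hx hy (by ring)

theorem le_rpow_mul_rpow_one_sub {α x y : ℝ} (hα : 1 ≤ α) (hx : 0 ≤ x) (hy : 0 < y) :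
    α * x + (1 - α) * y ≤ x ^ α * y ^ (1 - α) := by
  have h := one_add_mul_self_le_rpow_one_add (s := x / y - 1) (by linarith [div_nonneg hx hy.le]) hα
  rw [add_sub_cancel, div_rpow hx hy.le] at h
  calc α * x + (1 - α) * y = y * (1 + α * (x / y - 1)) := by field_simp; ring
    _ ≤ y * (x ^ α / y ^ α) := mul_le_mul_of_nonneg_left h hy.le
    _ = x ^ α * y ^ (1 - α) := by rw [rpow_sub hy, rpow_one]; ring

theorem rpow_mul_mul_rpow_one_sub {α x k : ℝ} (hx : 0 ≤ x) (hk : 0 ≤ k) :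
    x ^ α * (x * k) ^ (1 - α) = x * k ^ (1 - α) := by
  rw [mul_rpow hx hk, ← mul_assoc, ← rpow_add' hx (by norm_num), add_sub_cancel, rpow_one]

end Real

section Distributions

variable {ι : Type*} [Fintype ι] {x y : ι → ℝ} {α : ℝ}

theorem sum_rpow_mul_rpow_one_sub_le_one (hα₀ : 0 ≤ α) (hα₁ : α ≤ 1) (hx : ∀ i, 0 ≤ x i)
    (hy : ∀ i, 0 ≤ y i) (hxs : ∑ i, x i = 1) (hys : ∑ i, y i = 1) :
    ∑ i, x i ^ α * y i ^ (1 - α) ≤ 1 :=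
  calc ∑ i, x i ^ α * y i ^ (1 - α) ≤ ∑ i, (α * x i + (1 - α) * y i) :=
        Finset.sum_le_sum fun i _ ↦ rpow_mul_rpow_one_sub_le hα₀ hα₁ (hx i) (hy i)
    _ = 1 := by rw [Finset.sum_add_distrib, ← Finset.mul_sum, ← Finset.mul_sum, hxs, hys]; ring

theorem one_le_sum_rpow_mul_rpow_one_sub (hα : 1 ≤ α) (hx : ∀ i, 0 ≤ x i)
    (hy : ∀ i, 0 < y i) (hxs : ∑ i, x i = 1) (hys : ∑ i, y i = 1) :
    1 ≤ ∑ i, x i ^ α * y i ^ (1 - α) :=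
  calc 1 = ∑ i, (α * x i + (1 - α) * y i) := by
        rw [Finset.sum_add_distrib, ← Finset.mul_sum, ← Finset.mul_sum, hxs, hys]; ring
    _ ≤ ∑ i, x i ^ α * y i ^ (1 - α) :=
        Finset.sum_le_sum fun i _ ↦ le_rpow_mul_rpow_one_sub hα (hx i) (hy i)

theorem card_pos_of_sum_eq_one (hxs : ∑ i, x i = 1) : 0 < Fintype.card ι :=
  Finset.card_pos.2 (Finset.nonempty_of_sum_ne_zero (by rw [hxs]; exact one_ne_zero))

theorem le_one_of_sum_eq_one (hx : ∀ i, 0 ≤ x i) (hxs : ∑ i, x i = 1) (i : ι) : x i ≤ 1 :=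
  hxs ▸ Finset.single_le_sum (fun j _ ↦ hx j) (Finset.mem_univ i)

theorem one_le_sum_rpow (hα : α ≤ 1) (hx : ∀ i, 0 ≤ x i) (hxs : ∑ i, x i = 1) :
    1 ≤ ∑ i, x i ^ α :=
  hxs ▸ Finset.sum_le_sum fun i _ ↦ self_le_rpow_of_le_one (hx i) (le_one_of_sum_eq_one hx hxs i) hα

theorem sum_rpow_le_one (hα : 1 ≤ α) (hx : ∀ i, 0 ≤ x i) (hxs : ∑ i, x i = 1) :
    ∑ i, x i ^ α ≤ 1 :=
  hxs ▸ Finset.sum_le_sum fun i _ ↦ rpow_le_self_of_le_one (hx i) (le_one_of_sum_eq_one hx hxs i) hα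

theorem sum_one_div_card (hι : 0 < Fintype.card ι) : ∑ _i : ι, 1 / (Fintype.card ι : ℝ) = 1 := by
  rw [Finset.sum_const, Finset.card_univ, nsmul_eq_mul]
  field_simp

theorem sum_rpow_eq_card_rpow_mul (hι : 0 < Fintype.card ι) :
    ∑ i, x i ^ α = (Fintype.card ι : ℝ) ^ (1 - α) *
      ∑ i, x i ^ α * (1 / (Fintype.card ι : ℝ)) ^ (1 - α) := by
  have hN : (0 : ℝ) < Fintype.card ι := Nat.cast_pos.2 hι
  rw [← Finset.sum_mul, div_rpow zero_le_one hN.le, one_rpow, mul_one_div,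
    mul_div_cancel₀ _ (rpow_pos_of_pos hN _).ne']

theorem sum_rpow_le_card_rpow (hα₀ : 0 ≤ α) (hα₁ : α ≤ 1) (hx : ∀ i, 0 ≤ x i)
    (hxs : ∑ i, x i = 1) : ∑ i, x i ^ α ≤ (Fintype.card ι : ℝ) ^ (1 - α) := by
  have hι := card_pos_of_sum_eq_one hxs
  rw [sum_rpow_eq_card_rpow_mul hι]
  refine mul_le_of_le_one_right (by positivity) ?_
  exact sum_rpow_mul_rpow_one_sub_le_one hα₀ hα₁ hx (fun _ ↦ by positivity) hxs
    (sum_one_div_card hι)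

theorem card_rpow_le_sum_rpow (hα : 1 ≤ α) (hx : ∀ i, 0 ≤ x i) (hxs : ∑ i, x i = 1) :
    (Fintype.card ι : ℝ) ^ (1 - α) ≤ ∑ i, x i ^ α := by
  have hι := card_pos_of_sum_eq_one hxs
  rw [sum_rpow_eq_card_rpow_mul hι]
  refine le_mul_of_one_le_right (by positivity) ?_
  exact one_le_sum_rpow_mul_rpow_one_sub hα hx (fun _ ↦ by positivity) hxs (sum_one_div_card hι)

end Distributions

theorem div_mem_Icc_zero_one {x y : ℝ} (h : 0 ≤ x ∧ x ≤ y ∨ y ≤ x ∧ x ≤ 0) :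
    x / y ∈ Set.Icc 0 1 := by
  rcases h with ⟨h₀, h₁⟩ | ⟨h₁, h₀⟩
  · exact ⟨div_nonneg h₀ (h₀.trans h₁), div_le_one_of_le₀ h₁ (h₀.trans h₁)⟩
  · exact ⟨div_nonneg_of_nonpos h₀ (h₁.trans h₀), div_le_one_of_ge h₁ (h₁.trans h₀)⟩

section RenyiComplexity

variable {n : ℕ} {p : Fin n → ℝ} {α : ℝ}

theorem one_le_natCast_of_sum_eq_one (hsum : ∑ i, p i = 1) : 1 ≤ (n : ℝ) := by
  have : 0 < n := by simpa using card_pos_of_sum_eq_one hsum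
  exact_mod_cast this

theorem renyiH_mem_Icc (hp : ∀ i, 0 ≤ p i) (hsum : ∑ i, p i = 1) (hα : 0 ≤ α) :
    renyiH n p α ∈ Set.Icc 0 1 := by
  have hn : (0 : ℝ) < n := by linarith [one_le_natCast_of_sum_eq_one hsum]
  rw [renyiH, one_div_mul_eq_div, ← log_rpow hn]
  apply div_mem_Icc_zero_one
  rcases le_or_gt α 1 with h | h
  · have hS : ∑ i, p i ^ α ≤ (n : ℝ) ^ (1 - α) := by
      simpa using sum_rpow_le_card_rpow hα h hp hsum
    have hS₁ := one_le_sum_rpow h hp hsum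
    exact Or.inl ⟨log_nonneg hS₁, log_le_log (by linarith) hS⟩
  · have hS : (n : ℝ) ^ (1 - α) ≤ ∑ i, p i ^ α := by
      simpa using card_rpow_le_sum_rpow h.le hp hsum
    have hS₀ : 0 ≤ ∑ i, p i ^ α := Finset.sum_nonneg fun i _ ↦ rpow_nonneg (hp i) _
    exact Or.inr ⟨log_le_log (by positivity) hS, log_nonpos hS₀ (sum_rpow_le_one h.le hp hsum)⟩

noncomputable def midUniform (n : ℕ) (p : Fin n → ℝ) (i : Fin n) : ℝ := (p i + 1 / (n : ℝ)) / 2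

noncomputable def renyiA (n : ℕ) (p : Fin n → ℝ) (α : ℝ) : ℝ :=
  ∑ i, p i ^ α * midUniform n p i ^ (1 - α)

noncomputable def renyiB (n : ℕ) (p : Fin n → ℝ) (α : ℝ) : ℝ :=
  ∑ i, (n : ℝ) ^ (-α) * midUniform n p i ^ (1 - α)

-- `renyiAstar` and `renyiBstar` are the values of `renyiA` and `renyiB` at a point mass, whose
-- divergence from the uniform distribution is therefore `renyiDstar`.
noncomputable def renyiAstar (n : ℕ) (α : ℝ) : ℝ := ((1 + 1 / (n : ℝ)) / 2) ^ (1 - α)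

noncomputable def renyiBstar (n : ℕ) (α : ℝ) : ℝ :=
  (n : ℝ) ^ (-α) * ((n - 1) * (1 / (n : ℝ) / 2) ^ (1 - α) + ((1 + 1 / (n : ℝ)) / 2) ^ (1 - α))

theorem renyiD_eq :
    renyiD n p α = 1 / (2 * (α - 1)) * (log (renyiA n p α) + log (renyiB n p α)) :=
  rfl

theorem midUniform_pos (hp : ∀ i, 0 ≤ p i) (hsum : ∑ i, p i = 1) (i : Fin n) :
    0 < midUniform n p i := by
  have := one_le_natCast_of_sum_eq_one hsum
  have := hp i
  unfold midUniform
  positivity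

theorem sum_one_div_natCast (hsum : ∑ i, p i = 1) : ∑ _i : Fin n, 1 / (n : ℝ) = 1 := by
  simpa using sum_one_div_card (card_pos_of_sum_eq_one hsum)

theorem sum_midUniform (hsum : ∑ i, p i = 1) : ∑ i, midUniform n p i = 1 := by
  simp only [midUniform, ← Finset.sum_div, Finset.sum_add_distrib, hsum, sum_one_div_natCast hsum]
  norm_num

theorem mul_le_midUniform (hp : ∀ i, 0 ≤ p i) (hsum : ∑ i, p i = 1) (i : Fin n) :
    p i * ((1 + 1 / (n : ℝ)) / 2) ≤ midUniform n p i := by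
  have h := mul_le_mul_of_nonneg_right (le_one_of_sum_eq_one hp hsum i)
    (one_div_nonneg.2 (Nat.cast_nonneg n))
  unfold midUniform
  linarith

theorem midUniform_eq_one_sub_mul_add_mul (i : Fin n) :
    midUniform n p i = (1 - p i) * (1 / (n : ℝ) / 2) + p i * ((1 + 1 / (n : ℝ)) / 2) := by
  unfold midUniform; ring

theorem sum_one_sub_mul_add_mul (hsum : ∑ i, p i = 1) (u v : ℝ) :
    ∑ i, ((1 - p i) * u + p i * v) = (n - 1) * u + v := by
  simp only [Finset.sum_add_distrib, ← Finset.sum_mul, Finset.sum_sub_distrib, hsum]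
  simp

theorem renyiB_eq : renyiB n p α = ∑ i, (1 / (n : ℝ)) ^ α * midUniform n p i ^ (1 - α) := by
  simp only [renyiB, one_div, inv_rpow (Nat.cast_nonneg n), rpow_neg (Nat.cast_nonneg n)]

theorem renyiAstar_mul_renyiBstar (hn : 0 < (n : ℝ)) :
    renyiAstar n α * renyiBstar n α =
      ((((n : ℝ) + 1) ^ (1 - α) + n - 1) / n) * (((n : ℝ) + 1) / (4 * n)) ^ (1 - α) := by
  have hu : 0 ≤ 1 / (n : ℝ) / 2 := by positivity
  have e1 : (1 + 1 / (n : ℝ)) / 2 = (n + 1) * (1 / n / 2) := by field_simp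
  have e2 : ((n : ℝ) + 1) / (4 * n) = (n + 1) * (1 / n / 2) * (1 / 2) := by field_simp; ring
  have e3 : (n : ℝ) ^ (-α) * (1 / n / 2) ^ (1 - α) * n = (1 / 2) ^ (1 - α) := by
    rw [show 1 / (n : ℝ) / 2 = 1 / 2 * (n : ℝ)⁻¹ by ring,
      mul_rpow (by norm_num) (inv_nonneg.2 hn.le), inv_rpow hn.le, ← rpow_neg hn.le, mul_left_comm, ← rpow_add hn,
      show -α + -(1 - α) = -1 by ring, rpow_neg_one]
    field_simp
  have hn1 : 0 ≤ (n : ℝ) + 1 := by linarith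
  rw [renyiAstar, renyiBstar, e1, e2, mul_rpow (mul_nonneg hn1 hu) (by norm_num),
    mul_rpow hn1 hu, ← e3]
  field_simp
  ring

theorem renyiAstar_pos : 0 < renyiAstar n α := by unfold renyiAstar; positivity

theorem renyiBstar_pos (hn : 1 ≤ (n : ℝ)) : 0 < renyiBstar n α := by
  unfold renyiBstar
  have : 0 ≤ (n : ℝ) - 1 := by linarith
  positivity

theorem renyiDstar_eq (hn : 1 ≤ (n : ℝ)) :
    renyiDstar n α = 1 / (2 * (α - 1)) * (log (renyiAstar n α) + log (renyiBstar n α)) := by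
  rw [renyiDstar, ← log_mul renyiAstar_pos.ne' (renyiBstar_pos hn).ne',
    renyiAstar_mul_renyiBstar (by linarith)]

theorem renyiA_le_one (hp : ∀ i, 0 ≤ p i) (hsum : ∑ i, p i = 1) (hα₀ : 0 ≤ α) (hα₁ : α ≤ 1) :
    renyiA n p α ≤ 1 :=
  sum_rpow_mul_rpow_one_sub_le_one hα₀ hα₁ hp (fun i ↦ (midUniform_pos hp hsum i).le) hsum
    (sum_midUniform hsum)

theorem one_le_renyiA (hp : ∀ i, 0 ≤ p i) (hsum : ∑ i, p i = 1) (hα : 1 ≤ α) :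
    1 ≤ renyiA n p α :=
  one_le_sum_rpow_mul_rpow_one_sub hα hp (midUniform_pos hp hsum) hsum (sum_midUniform hsum)

theorem renyiB_le_one (hp : ∀ i, 0 ≤ p i) (hsum : ∑ i, p i = 1) (hα₀ : 0 ≤ α) (hα₁ : α ≤ 1) :
    renyiB n p α ≤ 1 := by
  rw [renyiB_eq]
  exact sum_rpow_mul_rpow_one_sub_le_one hα₀ hα₁ (fun _ ↦ by positivity)
    (fun i ↦ (midUniform_pos hp hsum i).le) (sum_one_div_natCast hsum) (sum_midUniform hsum)

theorem one_le_renyiB (hp : ∀ i, 0 ≤ p i) (hsum : ∑ i, p i = 1) (hα : 1 ≤ α) :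
    1 ≤ renyiB n p α := by
  rw [renyiB_eq]
  exact one_le_sum_rpow_mul_rpow_one_sub hα (fun _ ↦ by positivity) (midUniform_pos hp hsum)
    (sum_one_div_natCast hsum) (sum_midUniform hsum)

theorem renyiAstar_le_renyiA (hp : ∀ i, 0 ≤ p i) (hsum : ∑ i, p i = 1) (hα : α ≤ 1) :
    renyiAstar n α ≤ renyiA n p α :=
  calc renyiAstar n α = ∑ i, p i ^ α * (p i * ((1 + 1 / (n : ℝ)) / 2)) ^ (1 - α) := by
        simp only [rpow_mul_mul_rpow_one_sub (hp _) (by positivity : (0 : ℝ) ≤ (1 + 1 / n) / 2),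
          ← Finset.sum_mul, hsum, one_mul, renyiAstar]
    _ ≤ renyiA n p α := Finset.sum_le_sum fun i _ ↦ mul_le_mul_of_nonneg_left
        (rpow_le_rpow (mul_nonneg (hp i) (by positivity)) (mul_le_midUniform hp hsum i)
          (by linarith)) (rpow_nonneg (hp i) _)

theorem renyiA_le_renyiAstar (hp : ∀ i, 0 ≤ p i) (hsum : ∑ i, p i = 1) (hα : 1 ≤ α) :
    renyiA n p α ≤ renyiAstar n α :=
  calc renyiA n p α ≤ ∑ i, p i ^ α * (p i * ((1 + 1 / (n : ℝ)) / 2)) ^ (1 - α) := by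
        refine Finset.sum_le_sum fun i _ ↦ ?_
        rcases (hp i).eq_or_lt with h | h
        · simp [← h, zero_rpow (by linarith : α ≠ 0)]
        · exact mul_le_mul_of_nonneg_left (rpow_le_rpow_of_nonpos (by positivity)
            (mul_le_midUniform hp hsum i) (by linarith)) (rpow_nonneg (hp i) _)
    _ = renyiAstar n α := by
        simp only [rpow_mul_mul_rpow_one_sub (hp _) (by positivity : (0 : ℝ) ≤ (1 + 1 / n) / 2),
          ← Finset.sum_mul, hsum, one_mul, renyiAstar]

theorem renyiBstar_le_renyiB (hp : ∀ i, 0 ≤ p i) (hsum : ∑ i, p i = 1) (hα₀ : 0 ≤ α)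
    (hα₁ : α ≤ 1) : renyiBstar n α ≤ renyiB n p α := by
  rw [renyiBstar, renyiB, ← Finset.mul_sum, ← sum_one_sub_mul_add_mul hsum]
  gcongr with i
  rw [midUniform_eq_one_sub_mul_add_mul]
  have hpi := le_one_of_sum_eq_one hp hsum i
  exact (concaveOn_rpow (by linarith) (by linarith)).2 (Set.mem_Ici.2 (by positivity))
    (Set.mem_Ici.2 (by positivity)) (by linarith) (hp i) (by ring)

theorem renyiB_le_renyiBstar (hp : ∀ i, 0 ≤ p i) (hsum : ∑ i, p i = 1) (hα : 1 ≤ α) :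
    renyiB n p α ≤ renyiBstar n α := by
  have hn := one_le_natCast_of_sum_eq_one hsum
  rw [renyiBstar, renyiB, ← Finset.mul_sum, ← sum_one_sub_mul_add_mul hsum]
  gcongr with i
  rw [midUniform_eq_one_sub_mul_add_mul]
  have hpi := le_one_of_sum_eq_one hp hsum i
  exact (convexOn_rpow_of_nonpos (by linarith)).2 (Set.mem_Ioi.2 (by positivity))
    (Set.mem_Ioi.2 (by positivity)) (by linarith) (hp i) (by ring)

theorem renyiD_nonneg (hp : ∀ i, 0 ≤ p i) (hsum : ∑ i, p i = 1) (hα : 0 ≤ α) :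
    0 ≤ renyiD n p α := by
  rw [renyiD_eq]
  rcases le_or_gt α 1 with h | h
  · have hA₀ : 0 ≤ renyiA n p α := Finset.sum_nonneg fun i _ ↦
      mul_nonneg (rpow_nonneg (hp i) _) (rpow_nonneg (midUniform_pos hp hsum i).le _)
    have hB₀ : 0 ≤ renyiB n p α := Finset.sum_nonneg fun i _ ↦
      mul_nonneg (rpow_nonneg (Nat.cast_nonneg n) _) (rpow_nonneg (midUniform_pos hp hsum i).le _)
    exact mul_nonneg_of_nonpos_of_nonpos (one_div_nonpos.2 (by linarith))
      (add_nonpos (log_nonpos hA₀ (renyiA_le_one hp hsum hα h))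
        (log_nonpos hB₀ (renyiB_le_one hp hsum hα h)))
  · exact mul_nonneg (one_div_nonneg.2 (by linarith))
      (add_nonneg (log_nonneg (one_le_renyiA hp hsum h.le))
        (log_nonneg (one_le_renyiB hp hsum h.le)))

theorem renyiD_le_renyiDstar (hp : ∀ i, 0 ≤ p i) (hsum : ∑ i, p i = 1) (hα : 0 ≤ α) :
    renyiD n p α ≤ renyiDstar n α := by
  have hn := one_le_natCast_of_sum_eq_one hsum
  rw [renyiD_eq, renyiDstar_eq hn]
  rcases le_or_gt α 1 with h | h
  · refine mul_le_mul_of_nonpos_left (add_le_add ?_ ?_) (one_div_nonpos.2 (by linarith))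
    · exact log_le_log renyiAstar_pos (renyiAstar_le_renyiA hp hsum h)
    · exact log_le_log (renyiBstar_pos hn) (renyiBstar_le_renyiB hp hsum hα h)
  · have hA := one_le_renyiA hp hsum h.le
    have hB := one_le_renyiB hp hsum h.le
    refine mul_le_mul_of_nonneg_left (add_le_add ?_ ?_) (one_div_nonneg.2 (by linarith))
    · exact log_le_log (by linarith) (renyiA_le_renyiAstar hp hsum h.le)
    · exact log_le_log (by linarith) (renyiB_le_renyiBstar hp hsum h.le)

end RenyiComplexity

theorem renyi_complexity_bounds_general (n : ℕ) (p : Fin n → ℝ)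
    (hp : ∀ i, 0 ≤ p i) (hsum : ∑ i, p i = 1) :
    ∀ α : ℝ, 0 < α → α ≠ 1 → 0 ≤ renyiC n p α ∧ renyiC n p α ≤ 1 := by
  intro α hα _
  obtain ⟨hH₀, hH₁⟩ := renyiH_mem_Icc hp hsum hα.le
  have hD₀ := renyiD_nonneg hp hsum hα.le
  have hDstar := renyiD_le_renyiDstar hp hsum hα.le
  exact ⟨div_nonneg (mul_nonneg hD₀ hH₀) (hD₀.trans hDstar),
    div_le_one_of_le₀ ((mul_le_of_le_one_right hD₀ hH₁).trans hDstar) (hD₀.trans hDstar)⟩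

/-- For every probability distribution `p` and every `α > 0`, `α ≠ 1`,
the Rényi statistical complexity satisfies `0 ≤ C_α(p) ≤ 1`. -/
theorem renyi_complexity_bounds (n : ℕ) (hn : 2 ≤ n) (p : Fin n → ℝ)
    (hp : ∀ i, 0 ≤ p i) (hsum : ∑ i, p i = 1) :
    ∀ α : ℝ, 0 < α → α ≠ 1 → 0 ≤ renyiC n p α ∧ renyiC n p α ≤ 1 :=
  renyi_complexity_bounds_general n p hp hsum
end
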